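/- arXiv:2210.03681 — 2 statements merged into one kernel-verified Lean document; each statement's English description precedes it below -/
import Mathlib

section
/- Let G be a finite group, H ≤ G a subgroup of index 3, and ρ a d-dimensional irreducible complex representation of H. If the induced representation Ind_H^G ρ decomposes as a direct sum of exactly two irreducible G-representations of dimensions d+a and 2d−a with 0 < a < d, then a = d/2; in particular d is even and the two irreducible summands each have dimension 3d/2. -/
/-!
Restricted to `H`, the summand `R₁` has dimension `d + a`, which is not a multiple of `d`.
By Maschke's theorem it therefore cannot be built from copies of `ρ` alone, so it contains an
irreducible `σ ≇ ρ`, of dimension at most `a`. Frobenius reciprocity embeds the irreducible `R₁`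
in `Ind σ`, whence `d + a ≤ 3a`. The same argument for `R₂` gives `2d - a ≤ 3(d - a)`, and the
two inequalities force `2a = d`.
-/

open CategoryTheory Limits Module

universe u v

namespace FDRep

section Monoid

variable {k : Type u} [Field k] {G : Type v} [Monoid G]

theorem injective_hom_of_mono {X Y : FDRep k G} (f : X ⟶ Y) [Mono f] :
    Function.Injective f.hom :=
  (Rep.mono_iff_injective _).mp (inferInstance : Mono ((forget₂ (FDRep k G) (Rep k G)).map f))

theorem isIso_of_bijective {X Y : FDRep k G} (f : X ⟶ Y) (hf : Function.Bijective f.hom) :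
    IsIso f :=
  have : IsIso ((forget (FDRep k G)).map f) := (isIso_iff_bijective _).mpr hf
  isIso_of_reflects_iso f (forget _)

theorem finrank_eq_zero_iff_isZero (X : FDRep k G) : finrank k X = 0 ↔ IsZero X := by
  rw [finrank_zero_iff, IsZero.iff_id_eq_zero]
  refine ⟨fun _ => ?_, fun h => ⟨fun x y => ?_⟩⟩
  · ext x
    exact Subsingleton.elim _ _
  · have hzero (x : X) : x = 0 := congrArg (fun f : X ⟶ X => f.hom x) h
    rw [hzero x, hzero y]

theorem finrank_pos_of_simple (X : FDRep k G) [Simple X] : 0 < finrank k X :=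
  Nat.pos_of_ne_zero fun h => Simple.not_isZero X ((finrank_eq_zero_iff_isZero X).mp h)

theorem finrank_kernel {X Y : FDRep k G} (r : X ⟶ Y) :
    finrank k (kernel r : FDRep k G) = finrank k (LinearMap.ker r.hom.hom.hom) := by
  let F := Action.forget (FGModuleCat k) G ⋙ forget₂ (FGModuleCat k) (ModuleCat k)
  exact ((PreservesKernel.iso F r ≪≫ ModuleCat.kernelIsoKer (F.map r)).toLinearEquiv).finrank_eq

theorem finrank_eq_add_finrank_kernel {X Y : FDRep k G} (r : X ⟶ Y)
    (hr : Function.Surjective r.hom) :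
    finrank k X = finrank k Y + finrank k (kernel r : FDRep k G) := by
  rw [finrank_kernel, ← LinearMap.finrank_range_add_finrank_ker r.hom.hom.hom,
    (LinearMap.range_eq_top (f := r.hom.hom.hom)).mpr hr, finrank_top]

theorem finrank_le_of_mono {X Y : FDRep k G} (f : X ⟶ Y) [Mono f] : finrank k X ≤ finrank k Y :=
  LinearMap.finrank_le_finrank_of_injective (injective_hom_of_mono f)

theorem finrank_le_of_simple_of_ne_zero {X Y : FDRep k G} [Simple X] (f : X ⟶ Y) (hf : f ≠ 0) :
    finrank k X ≤ finrank k Y :=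
  have := mono_of_nonzero_from_simple hf
  finrank_le_of_mono f

theorem finrank_lt_of_lt {X : FDRep k G} {Y Z : Subobject X} (h : Y < Z) :
    finrank k (Y : FDRep k G) < finrank k (Z : FDRep k G) := by
  refine (finrank_le_of_mono (Subobject.ofLE Y Z h.le)).lt_of_ne fun heq => h.not_ge ?_
  have hinj := injective_hom_of_mono (Subobject.ofLE Y Z h.le)
  have := isIso_of_bijective _
    ⟨hinj, (LinearMap.injective_iff_surjective_of_finrank_eq_finrank heq).mp hinj⟩
  exact Subobject.le_of_comm (inv (Subobject.ofLE Y Z h.le)) (by simp)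

instance (X : FDRep k G) : IsArtinianObject X :=
  isArtinianObject.is_of_prop <| StrictMono.wellFoundedLT
    (f := fun Y : Subobject X => finrank k (Y : FDRep k G)) fun _ _ => finrank_lt_of_lt

end Monoid

section FiniteGroup

variable {k G : Type u} [Field k] [Group G] [Finite G] [NeZero (Nat.card G : k)]

theorem finrank_dvd_of_forall_simple_iso {ρ : FDRep k G} (X : FDRep k G)
    (h : ∀ σ : FDRep k G, Simple σ → (∃ f : σ ⟶ X, f ≠ 0) → Nonempty (σ ≅ ρ)) :
    finrank k ρ ∣ finrank k X := by
  induction hn : finrank k X using Nat.strong_induction_on generalizing X with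
  | _ n ih =>
  subst hn
  by_cases hX : IsZero X
  · rw [(finrank_eq_zero_iff_isZero X).mpr hX]
    exact dvd_zero _
  let i := simpleSubobjectArrow hX
  -- By Maschke's theorem every object of `FDRep k G` is injective, so `i` splits.
  let r := Injective.factorThru (𝟙 _) i
  have hir : i ≫ r = 𝟙 _ := Injective.comp_factorThru _ _
  obtain ⟨e⟩ := h _ inferInstance ⟨i, fun hi => id_nonzero _ (by rw [← hir, hi, zero_comp])⟩
  have hr : Function.Surjective r.hom := fun y => ⟨i.hom y, congrArg (fun f => f.hom y) hir⟩
  have hsplit := finrank_eq_add_finrank_kernel r hr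
  have hσ := finrank_pos_of_simple (simpleSubobject hX)
  rw [(isoToLinearEquiv e).finrank_eq] at hsplit hσ
  rw [hsplit, Nat.dvd_add_right dvd_rfl]
  refine ih _ (by omega) _ (fun τ hτ ⟨f, hf⟩ => h τ hτ ⟨f ≫ kernel.ι r, fun hf0 => hf ?_⟩) rfl
  rwa [← cancel_mono (kernel.ι r), zero_comp]

theorem exists_simple_not_iso_of_not_dvd {ρ X : FDRep k G} (h : ¬ finrank k ρ ∣ finrank k X) :
    ∃ σ : FDRep k G, Simple σ ∧ (∃ f : σ ⟶ X, f ≠ 0) ∧ ¬ Nonempty (σ ≅ ρ) := by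
  contrapose! h
  exact finrank_dvd_of_forall_simple_iso X h

end FiniteGroup

theorem finrank_le_mul_of_finrank_constituents_le {k G : Type u} [Field k] [Group G]
    {H : Subgroup G} [Finite H] [NeZero (Nat.card H : k)] (ind : FDRep k H → FDRep k G) {n : ℕ}
    (hdim : ∀ σ : FDRep k H, finrank k (ind σ) = n * finrank k σ)
    (ρ : FDRep k H) (R : FDRep k G) [Simple R]
    (hFrob : ∀ σ : FDRep k H, Simple σ →
      (∃ f : σ ⟶ (Action.res (FGModuleCat k) H.subtype).obj R, f ≠ 0) → ∃ g : R ⟶ ind σ, g ≠ 0)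
    (hR : ¬ finrank k ρ ∣ finrank k R) {c : ℕ}
    (hc : ∀ σ : FDRep k H, Simple σ → ¬ Nonempty (σ ≅ ρ) →
      (∃ f : σ ⟶ (Action.res (FGModuleCat k) H.subtype).obj R, f ≠ 0) → finrank k σ ≤ c) :
    finrank k R ≤ n * c := by
  obtain ⟨σ, hσ, hσR, hσρ⟩ :=
    exists_simple_not_iso_of_not_dvd (X := (Action.res _ H.subtype).obj R) hR
  obtain ⟨g, hg⟩ := hFrob σ hσ hσR
  calc finrank k R ≤ finrank k (ind σ) := finrank_le_of_simple_of_ne_zero g hg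
    _ = n * finrank k σ := hdim σ
    _ ≤ n * c := Nat.mul_le_mul_left n (hc σ hσ hσρ hσR)

end FDRep

theorem ind_two_summands_dim_general (G : Type) [Group G] [Fintype G] (H : Subgroup G)
    (ind : FDRep ℂ H ⥤ FDRep ℂ G)
    (hdim : ∀ σ : FDRep ℂ H, Module.finrank ℂ (ind.obj σ) = 3 * Module.finrank ℂ σ)
    (hFrob : ∀ (σ : FDRep ℂ H) (R : FDRep ℂ G), Simple σ → Simple R →
      ((∃ f : σ ⟶ (Action.res (FGModuleCat ℂ) H.subtype).obj R, f ≠ 0) ↔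
        (∃ g : R ⟶ ind.obj σ, g ≠ 0)))
    (ρ : FDRep ℂ H) (d a : ℕ)
    (hd : Module.finrank ℂ ρ = d) (ha : 0 < a) (had : a < d)
    (R₁ R₂ : FDRep ℂ G) (hR₁ : Simple R₁) (hR₂ : Simple R₂)
    (hd₁ : Module.finrank ℂ R₁ = d + a) (hd₂ : Module.finrank ℂ R₂ = 2 * d - a)
    (hconst₁ : ∀ σ : FDRep ℂ H, Simple σ → ¬ Nonempty (σ ≅ ρ) →
      (∃ f : σ ⟶ (Action.res (FGModuleCat ℂ) H.subtype).obj R₁, f ≠ 0) →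
      Module.finrank ℂ σ ≤ a)
    (hconst₂ : ∀ σ : FDRep ℂ H, Simple σ → ¬ Nonempty (σ ≅ ρ) →
      (∃ f : σ ⟶ (Action.res (FGModuleCat ℂ) H.subtype).obj R₂, f ≠ 0) →
      Module.finrank ℂ σ ≤ d - a) :
    2 * a = d ∧ Even d ∧
      2 * Module.finrank ℂ R₁ = 3 * d ∧ 2 * Module.finrank ℂ R₂ = 3 * d := by
  have hndvd₁ : ¬ d ∣ d + a := Nat.dvd_add_self_left.not.mpr (Nat.not_dvd_of_pos_of_lt ha had)
  have hndvd₂ : ¬ d ∣ 2 * d - a := by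
    rw [show 2 * d - a = d + (d - a) by omega, Nat.dvd_add_self_left]
    exact Nat.not_dvd_of_pos_of_lt (by omega) (by omega)
  have h₁ := FDRep.finrank_le_mul_of_finrank_constituents_le ind.obj hdim ρ R₁
    (fun σ hσ => (hFrob σ R₁ hσ hR₁).mp) (by rwa [hd, hd₁]) hconst₁
  have h₂ := FDRep.finrank_le_mul_of_finrank_constituents_le ind.obj hdim ρ R₂
    (fun σ hσ => (hFrob σ R₂ hσ hR₂).mp) (by rwa [hd, hd₂]) hconst₂
  rw [hd₁] at h₁
  rw [hd₂] at h₂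
  have h2a : 2 * a = d := by omega
  exact ⟨h2a, ⟨a, by omega⟩, by omega, by omega⟩

/-- Let `G` be a finite group, `H ≤ G` of index 3, and `ρ` a `d`-dimensional irreducible
complex representation of `H`.  `ind` is the induction functor (it triples dimensions, and
satisfies Frobenius reciprocity: a simple `σ` occurs in `Res R` iff the simple `R` occurs in
`Ind σ`).  If `Ind ρ` decomposes as a direct sum of exactly two irreducibles `R₁, R₂` of
dimensions `d + a` and `2d − a` with `0 < a < d`, where (per Frobenius reciprocity) every
irreducible constituent of `Res Rᵢ` other than `ρ` has dimension at most the complementary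
dimension, then `a = d/2`, i.e. `2a = d`; in particular `d` is even and both summands have
dimension `3d/2`. -/
theorem ind_two_summands_dim (G : Type) [Group G] [Fintype G] (H : Subgroup G)
    (hidx : H.index = 3)
    (ind : FDRep ℂ H ⥤ FDRep ℂ G)
    (hdim : ∀ σ : FDRep ℂ H, Module.finrank ℂ (ind.obj σ) = 3 * Module.finrank ℂ σ)
    (hFrob : ∀ (σ : FDRep ℂ H) (R : FDRep ℂ G), Simple σ → Simple R →
      ((∃ f : σ ⟶ (Action.res (FGModuleCat ℂ) H.subtype).obj R, f ≠ 0) ↔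
        (∃ g : R ⟶ ind.obj σ, g ≠ 0)))
    (ρ : FDRep ℂ H) (hρ : Simple ρ) (d a : ℕ)
    (hd : Module.finrank ℂ ρ = d) (ha : 0 < a) (had : a < d)
    (R₁ R₂ : FDRep ℂ G) (hR₁ : Simple R₁) (hR₂ : Simple R₂)
    (hdec : (ind.obj ρ).character = R₁.character + R₂.character)
    (hd₁ : Module.finrank ℂ R₁ = d + a) (hd₂ : Module.finrank ℂ R₂ = 2 * d - a)
    (hconst₁ : ∀ σ : FDRep ℂ H, Simple σ → ¬ Nonempty (σ ≅ ρ) →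
      (∃ f : σ ⟶ (Action.res (FGModuleCat ℂ) H.subtype).obj R₁, f ≠ 0) →
      Module.finrank ℂ σ ≤ a)
    (hconst₂ : ∀ σ : FDRep ℂ H, Simple σ → ¬ Nonempty (σ ≅ ρ) →
      (∃ f : σ ⟶ (Action.res (FGModuleCat ℂ) H.subtype).obj R₂, f ≠ 0) →
      Module.finrank ℂ σ ≤ d - a) :
    2 * a = d ∧ Even d ∧
      2 * Module.finrank ℂ R₁ = 3 * d ∧ 2 * Module.finrank ℂ R₂ = 3 * d :=
  ind_two_summands_dim_general G H ind hdim hFrob ρ d a hd ha had R₁ R₂ hR₁ hR₂ hd₁ hd₂ hconst₁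
    hconst₂
end

section
/- Let ρ = χ₁ ⊕ ... ⊕ χ_d be a direct sum of one-dimensional representations of a group G (given by characters χᵢ: G → ℂˣ), conjugated by an invertible matrix U: ρ'(g) = U diag(χ₁(g),...,χ_d(g)) U⁻¹. If for some g ∈ G the matrix ρ'(g) has all entries in its first row nonzero and d ≥ 2, and moreover ρ'(h) is diagonal for a fixed h ∈ G, then all χᵢ(h) must be equal (the h-spectrum of each one-dimensional summand overlaps). -/
open Matrix

/-- `t-spectrum criterion` for one-dimensional summands.  Let `ρ' = U · diag(χ₁,…,χ_d) · U⁻¹`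
be a conjugated direct sum of one-dimensional representations (characters `χᵢ : G → ℂˣ`),
with `d ≥ 2` and `U` invertible.  If `ρ'(h)` is diagonal for a fixed `h ∈ G` and all entries
of the first row of `ρ'(g)` are nonzero for some `g ∈ G`, then all `χᵢ(h)` are equal. -/
theorem one_dim_sum_spectrum_overlap (G : Type) [Group G] (d : ℕ) (hd : 2 ≤ d)
    (χ : Fin d → (G →* ℂˣ)) (U : Matrix (Fin d) (Fin d) ℂ) (hU : IsUnit U)
    (ρ' : G → Matrix (Fin d) (Fin d) ℂ)
    (hρ' : ∀ x : G, ρ' x = U * Matrix.diagonal (fun i => (χ i x : ℂ)) * U⁻¹)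
    (g h : G) (hdiag : (ρ' h).IsDiag)
    (hrow : ∀ j : Fin d, ρ' g ⟨0, by omega⟩ j ≠ 0) :
    ∀ i i' : Fin d, χ i h = χ i' h := by
  have hdet : IsUnit U.det := (Matrix.isUnit_iff_isUnit_det U).mp hU
  have hinv : U⁻¹ * U = 1 := Matrix.nonsing_inv_mul U hdet
  set e0 : Fin d := ⟨0, by omega⟩ with he0
  set δ : Fin d → ℂ := fun i => ρ' h i i with hδ
  have hD : Matrix.diagonal δ = ρ' h := hdiag.diagonal_diag
  have hUD : U * Matrix.diagonal (fun i => (χ i h : ℂ)) = Matrix.diagonal δ * U := by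
    rw [hD, hρ' h, Matrix.mul_assoc (U * _), hinv, Matrix.mul_one]
  have hDU : Matrix.diagonal (fun i => (χ i h : ℂ)) * U⁻¹ = U⁻¹ * Matrix.diagonal δ := by
    rw [hD, hρ' h, ← Matrix.mul_assoc, ← Matrix.mul_assoc, hinv, Matrix.one_mul]
  have hA : ∀ i k, U i k * (χ k h : ℂ) = δ i * U i k := by
    intro i k
    have := congrArg (fun M => M i k) hUD
    simpa [Matrix.mul_diagonal, Matrix.diagonal_mul] using this
  have hB : ∀ k j, (χ k h : ℂ) * U⁻¹ k j = U⁻¹ k j * δ j := by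
    intro k j
    have := congrArg (fun M => M k j) hDU
    simpa [Matrix.mul_diagonal, Matrix.diagonal_mul] using this
  have hrow' : ∀ j, ∃ k, U e0 k ≠ 0 ∧ U⁻¹ k j ≠ 0 := by
    intro j
    by_contra hc
    push_neg at hc
    apply hrow j
    rw [hρ' g]
    show (U * Matrix.diagonal (fun i => (χ i g : ℂ)) * U⁻¹) e0 j = 0
    rw [Matrix.mul_apply]
    refine Finset.sum_eq_zero fun k _ => ?_
    rw [Matrix.mul_diagonal]
    by_cases hk : U e0 k = 0
    · rw [hk, zero_mul, zero_mul]
    · rw [hc k hk, mul_zero]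
  have hrowinv : ∀ i, ∃ j, U⁻¹ i j ≠ 0 := by
    intro i
    by_contra hc
    push_neg at hc
    have h0 : (U⁻¹ * U) i i = 0 := by
      rw [Matrix.mul_apply]
      exact Finset.sum_eq_zero fun k _ => by rw [hc k, zero_mul]
    rw [hinv] at h0
    simp [Matrix.one_apply] at h0
  have key : ∀ i, (χ i h : ℂ) = δ e0 := by
    intro i
    obtain ⟨j, hj⟩ := hrowinv i
    obtain ⟨k, hk1, hk2⟩ := hrow' j
    have h1 : (χ i h : ℂ) = δ j := by
      have hb := hB i j
      rw [mul_comm ((χ i h : ℂ))] at hb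
      exact mul_left_cancel₀ hj hb
    have h2 : (χ k h : ℂ) = δ j := by
      have hb := hB k j
      rw [mul_comm ((χ k h : ℂ))] at hb
      exact mul_left_cancel₀ hk2 hb
    have h3 : (χ k h : ℂ) = δ e0 := by
      have ha := hA e0 k
      rw [mul_comm (δ e0)] at ha
      exact mul_left_cancel₀ hk1 ha
    rw [h1, ← h2, h3]
  intro i i'
  exact Units.ext ((key i).trans (key i').symm)
end
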